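/- arXiv:math/0311153 — 2 statements merged into one kernel-verified Lean document; each statement's English description precedes it below -/
import Mathlib

section
/- Every element of B_3 is represented by a unique word in right-greedy canonical form, i.e., a word of the form a^{k_1} b^{k_2} a^{k_3} ⋯ b^{k_n} (aba)^j with j ∈ ℤ, k_i > 1 for 1 < i < n, and k_1, k_n ≥ 0. -/
def B3Rel : Set (FreeGroup Bool) :=
  {FreeGroup.of true * FreeGroup.of false * FreeGroup.of true *
    (FreeGroup.of false * FreeGroup.of true * FreeGroup.of false)⁻¹}

abbrev B3 := PresentedGroup B3Rel

def ga : B3 := PresentedGroup.of true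
def gb : B3 := PresentedGroup.of false

/-- generator by a boolean: `true ↦ a`, `false ↦ b`. -/
def gen (x : Bool) : B3 := if x then ga else gb

/-- A letter: first component is the generator (`true` = a), second the sign
(`true` = positive). -/
abbrev Letter := Bool × Bool

def evalLetter (l : Letter) : B3 := if l.2 then gen l.1 else (gen l.1)⁻¹

def evalWord (w : List Letter) : B3 := (w.map evalLetter).prod

/-- `w` is geodesic: no shorter word represents the same element. -/
def IsGeodesic (w : List Letter) : Prop :=
  ∀ v : List Letter, evalWord v = evalWord w → w.length ≤ v.length

/-- `w` is freely reduced. -/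
def Reduced (w : List Letter) : Prop :=
  w.Chain' fun x y => ¬ (x.1 = y.1 ∧ x.2 = !y.2)

def la : Letter := (true, true)
def lA : Letter := (true, false)
def lb : Letter := (false, true)
def lB : Letter := (false, false)
/-- `altEval s [k₁,…,kₙ]` is the alternating word `x^{k₁} y^{k₂} x^{k₃} ⋯`
where `x = gen s`, `y` the other generator. -/
def altEval : Bool → List ℕ → B3
  | _, [] => 1
  | s, k :: r => (gen s) ^ k * altEval (!s) r

namespace B3NF

/-- the half-twist Δ = aba -/
def dl : B3 := ga * gb * ga

lemma braid_rel : ga * gb * ga = gb * ga * gb := by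
  have h : (PresentedGroup.mk B3Rel) (FreeGroup.of true * FreeGroup.of false * FreeGroup.of true *
      (FreeGroup.of false * FreeGroup.of true * FreeGroup.of false)⁻¹) = 1 := by
    apply (QuotientGroup.eq_one_iff _).2
    exact Subgroup.subset_normalClosure rfl
  simp only [map_mul, map_inv] at h
  have h2 : ga * gb * ga * (gb * ga * gb)⁻¹ = 1 := h
  exact mul_inv_eq_one.1 h2

lemma d_a : dl * ga = gb * dl := by
  show ga * gb * ga * ga = gb * (ga * gb * ga)
  conv_lhs => rw [braid_rel]
  simp [mul_assoc]

lemma d_b : dl * gb = ga * dl := by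
  show ga * gb * ga * gb = ga * (ga * gb * ga)
  conv_rhs => rw [braid_rel]
  simp [mul_assoc]

lemma d_gen (s : Bool) : dl * gen s = gen (!s) * dl := by
  cases s <;> simp [gen, d_a, d_b]

lemma d_pow (s : Bool) (k : ℕ) : dl * gen s ^ k = gen (!s) ^ k * dl := by
  induction k with
  | zero => simp
  | succ n ih => rw [pow_succ, pow_succ, ← mul_assoc, ih, mul_assoc, d_gen, ← mul_assoc]

lemma d_alt (s : Bool) (ks : List ℕ) : dl * altEval s ks = altEval (!s) ks * dl := by
  induction ks generalizing s with
  | nil => simp [altEval]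
  | cons k r ih =>
    rw [altEval, altEval, ← mul_assoc, d_pow, mul_assoc, ih, Bool.not_not, ← mul_assoc]

lemma alt_d (s : Bool) (ks : List ℕ) : altEval s ks * dl = dl * altEval (!s) ks := by
  rw [d_alt, Bool.not_not]

def evalT (t : Bool × List ℕ × ℤ) : B3 := altEval t.1 t.2.1 * (ga * gb * ga) ^ t.2.2

lemma evalT_def (t : Bool × List ℕ × ℤ) : evalT t = altEval t.1 t.2.1 * dl ^ t.2.2 := rfl

lemma dl_zpow_succ (j : ℤ) : dl * dl ^ j = dl ^ (j + 1) := by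
  rw [zpow_add_one]; exact ((Commute.refl dl).zpow_right j).eq


/-- `T2 l` : every entry of `l` is `≥ 2` except possibly the last, which is `≥ 1`. -/
def T2 : List ℕ → Prop
  | [] => True
  | [k] => 1 ≤ k
  | k :: k2 :: r => 2 ≤ k ∧ T2 (k2 :: r)

/-- validity of a canonical triple -/
def VL : Bool × List ℕ × ℤ → Prop
  | (s, [], _) => s = true
  | (_, k :: r, _) => 1 ≤ k ∧ T2 r

lemma T2_head {k : ℕ} {r : List ℕ} (h : T2 (k :: r)) : 1 ≤ k := by
  cases r with
  | nil => exact h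
  | cons q r => exact le_trans (by norm_num) h.1

lemma T2_tail {k : ℕ} {r : List ℕ} (h : T2 (k :: r)) : T2 r := by
  cases r with
  | nil => trivial
  | cons q r => exact h.2

lemma T2_cc {k q : ℕ} {r : List ℕ} (h : T2 (k :: q :: r)) : 2 ≤ k ∧ T2 (q :: r) := h

lemma T2_cons {k : ℕ} {r : List ℕ} (hk : 2 ≤ k) (h : T2 r) : T2 (k :: r) := by
  cases r with
  | nil => exact le_trans (by norm_num) hk
  | cons q r => exact ⟨hk, h⟩

/-- the conditions appearing in the theorem statement -/
def SC (t : Bool × List ℕ × ℤ) : Prop :=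
  (∀ k ∈ t.2.1, 1 ≤ k) ∧
  (∀ i : ℕ, 0 < i → i + 1 < t.2.1.length → 2 ≤ t.2.1[i]!) ∧
  (t.2.1 = [] → t.1 = true)

lemma T2_iff (l : List ℕ) :
    T2 l ↔ ((∀ k ∈ l, 1 ≤ k) ∧ ∀ i : ℕ, i + 1 < l.length → 2 ≤ l[i]!) := by
  induction l with
  | nil => simp [T2]
  | cons k r ih =>
    cases r with
    | nil =>
      simp [T2]
    | cons k2 r2 =>
      constructor
      · rintro ⟨h2, ht⟩
        have ih1 := (ih.1 ht)
        constructor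
        · intro x hx
          rcases List.mem_cons.1 hx with rfl | hx
          · omega
          · exact ih1.1 x hx
        · intro i hi
          cases i with
          | zero => simpa using h2
          | succ n =>
            rw [List.getElem!_cons_succ]
            exact ih1.2 n (by simpa using Nat.lt_of_succ_lt_succ hi)
      · rintro ⟨hmem, hidx⟩
        refine ⟨by simpa using hidx 0 (by simp), ih.2 ⟨?_, ?_⟩⟩
        · intro x hx; exact hmem x (List.mem_cons_of_mem _ hx)
        · intro i hi
          have := hidx (i+1) (by simpa using Nat.succ_lt_succ hi)
          rwa [List.getElem!_cons_succ] at this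

lemma VL_iff (t : Bool × List ℕ × ℤ) : VL t ↔ SC t := by
  obtain ⟨s, ks, j⟩ := t
  cases ks with
  | nil => simp [VL, SC]
  | cons k r =>
    constructor
    · rintro ⟨hk, ht⟩
      have hr := (T2_iff r).1 ht
      refine ⟨?_, ?_, by simp⟩
      · intro x hx
        rcases List.mem_cons.1 hx with rfl | hx
        · exact hk
        · exact hr.1 x hx
      · intro i hi0 hi
        cases i with
        | zero => omega
        | succ n =>
          show 2 ≤ (k :: r)[n+1]!
          rw [List.getElem!_cons_succ]
          exact hr.2 n (by simpa using Nat.lt_of_succ_lt_succ hi)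
    · rintro ⟨hmem, hidx, _⟩
      refine ⟨hmem k (by simp), (T2_iff r).2 ⟨?_, ?_⟩⟩
      · intro x hx; exact hmem x (List.mem_cons_of_mem _ hx)
      · intro i hi
        have := hidx (i+1) (by omega) (by simpa using Nat.succ_lt_succ hi)
        rwa [List.getElem!_cons_succ] at this


/-- left multiplication by `a` on canonical triples -/
def pushA : Bool × List ℕ × ℤ → Bool × List ℕ × ℤ
  | (true, [], j) => (true, [1], j)
  | (true, k :: r, j) => (true, (k+1) :: r, j)
  | (false, [], j) => (true, [1], j)
  | (false, [1], j) => (true, [1, 1], j)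
  | (false, [1, 1], j) => (true, [], j+1)
  | (false, 1 :: (k+2) :: r, j) => (false, (k+1) :: r, j+1)
  | (false, 1 :: 1 :: q :: r, j) => (false, 0 :: q :: r, j+1)
  | (false, 1 :: 0 :: r, j) => (false, 0 :: r, j+1)
  | (false, 0 :: r, j) => (true, 1 :: 0 :: r, j)
  | (false, (k+2) :: r, j) => (true, 1 :: (k+2) :: r, j)

/-- left multiplication by `a⁻¹` on canonical triples -/
def pullA : Bool × List ℕ × ℤ → Bool × List ℕ × ℤ
  | (true, [], j) => (false, [1, 1], j-1)
  | (true, [1], j) => (true, [], j)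
  | (true, 1 :: k :: r, j) => (false, k :: r, j)
  | (true, (k+2) :: r, j) => (true, (k+1) :: r, j)
  | (true, 0 :: r, _) => (true, 0 :: r, 0)
  | (false, [], j) => (false, [1, 1], j-1)
  | (false, k :: r, j) => (false, 1 :: (k+1) :: r, j-1)

/-- conjugation by Δ on canonical triples -/
def sw : Bool × List ℕ × ℤ → Bool × List ℕ × ℤ
  | (_, [], j) => (true, [], j)
  | (s, k :: r, j) => (!s, k :: r, j)

def pushB (t : Bool × List ℕ × ℤ) : Bool × List ℕ × ℤ := sw (pushA (sw t))
def pullB (t : Bool × List ℕ × ℤ) : Bool × List ℕ × ℤ := sw (pullA (sw t))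

/-- triples whose list part is empty only with first component `true` -/
def T' (t : Bool × List ℕ × ℤ) : Prop := t.2.1 = [] → t.1 = true

lemma pushA_T' : ∀ t, T' (pushA t)
  | (true, [], j) => by simp [pushA, T']
  | (true, k :: r, j) => by simp [pushA, T']
  | (false, [], j) => by simp [pushA, T']
  | (false, [1], j) => by simp [pushA, T']
  | (false, [1, 1], j) => by simp [pushA, T']
  | (false, 1 :: (k+2) :: r, j) => by simp [pushA, T']
  | (false, 1 :: 1 :: q :: r, j) => by simp [pushA, T']
  | (false, 1 :: 0 :: r, j) => by simp [pushA, T']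
  | (false, 0 :: r, j) => by simp [pushA, T']
  | (false, (k+2) :: r, j) => by simp [pushA, T']

lemma pullA_T' : ∀ t, T' (pullA t)
  | (true, [], j) => by simp [pullA, T']
  | (true, [1], j) => by simp [pullA, T']
  | (true, 1 :: k :: r, j) => by simp [pullA, T']
  | (true, (k+2) :: r, j) => by simp [pullA, T']
  | (true, 0 :: r, j) => by simp [pullA, T']
  | (false, [], j) => by simp [pullA, T']
  | (false, k :: r, j) => by simp [pullA, T']

lemma sw_T' : ∀ t, T' (sw t)
  | (s, [], j) => by simp [sw, T']
  | (s, k :: r, j) => by simp [sw, T']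

lemma sw_sw : ∀ t, T' t → sw (sw t) = t
  | (s, [], j), h => by have := h rfl; subst this; rfl
  | (s, k :: r, j), _ => by simp [sw]

lemma VL_T' : ∀ t, VL t → T' t
  | (s, [], j), h => fun _ => h
  | (s, k :: r, j), _ => by simp [T']

lemma VL_sw : ∀ t, VL t → VL (sw t)
  | (s, [], j), h => by subst h; exact rfl
  | (s, k :: r, j), h => h

lemma VL_pushA : ∀ t, VL t → VL (pushA t)
  | (true, [], j), h => by simp [pushA, VL, T2]
  | (true, k :: r, j), h => by
      refine ⟨by omega, h.2⟩
  | (false, [], j), h => by simp [VL] at h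
  | (false, [1], j), h => by simp [pushA, VL, T2]
  | (false, [1, 1], j), h => by simp [pushA, VL]
  | (false, 1 :: (k+2) :: r, j), h => ⟨by omega, T2_tail h.2⟩
  | (false, 1 :: 1 :: q :: r, j), h => by
      have := (T2_cc h.2).1; omega
  | (false, 1 :: 0 :: r, j), h => by
      have := T2_head h.2; omega
  | (false, 0 :: r, j), h => by have := h.1; omega
  | (false, (k+2) :: r, j), h => ⟨le_refl 1, T2_cons (by omega) h.2⟩

lemma VL_pullA : ∀ t, VL t → VL (pullA t)
  | (true, [], j), h => by exact ⟨le_refl 1, by simp [T2]⟩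
  | (true, [1], j), h => by simp [pullA, VL]
  | (true, 1 :: k :: r, j), h => ⟨T2_head h.2, T2_tail h.2⟩
  | (true, (k+2) :: r, j), h => ⟨by omega, h.2⟩
  | (true, 0 :: r, j), h => by have := h.1; omega
  | (false, [], j), h => by simp [VL] at h
  | (false, k :: r, j), h => ⟨le_refl 1, T2_cons (by have := h.1; omega) h.2⟩

lemma pullA_pushA : ∀ t, VL t → pullA (pushA t) = t
  | (true, [], j), h => rfl
  | (true, (k+1) :: r, j), h => rfl
  | (true, 0 :: r, j), h => by have := h.1; omega
  | (false, [], j), h => by simp [VL] at h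
  | (false, [1], j), h => rfl
  | (false, [1, 1], j), h => by simp [pushA, pullA]
  | (false, 1 :: (k+2) :: r, j), h => by simp [pushA, pullA]
  | (false, 1 :: 1 :: q :: r, j), h => by have := (T2_cc h.2).1; omega
  | (false, 1 :: 0 :: r, j), h => by have := T2_head h.2; omega
  | (false, 0 :: r, j), h => by have := h.1; omega
  | (false, (k+2) :: r, j), h => rfl

lemma pushA_pullA : ∀ t, VL t → pushA (pullA t) = t
  | (true, [], j), h => by simp [pushA, pullA]
  | (true, [1], j), h => rfl
  | (true, [1, 1], j), h => rfl
  | (true, 1 :: 1 :: q :: r, j), h => by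
      have := (T2_cc h.2).1
      omega
  | (true, 1 :: 0 :: r, j), h => by have := T2_head h.2; omega
  | (true, 1 :: (k+2) :: r, j), h => rfl
  | (true, (k+2) :: r, j), h => rfl
  | (true, 0 :: r, j), h => by have := h.1; omega
  | (false, [], j), h => by simp [VL] at h
  | (false, (k+1) :: r, j), h => by simp [pushA, pullA]
  | (false, 0 :: r, j), h => by have := h.1; omega

lemma pushA_swsw : ∀ t, pushA (sw (sw t)) = pushA t
  | (true, [], j) => rfl
  | (false, [], j) => rfl
  | (s, k :: r, j) => by simp [sw]

lemma sw_pushA (t : Bool × List ℕ × ℤ) : sw (pushA t) = pushB (sw t) := by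
  rw [pushB, pushA_swsw]

lemma sw_pushB (t : Bool × List ℕ × ℤ) : sw (pushB t) = pushA (sw t) := by
  rw [pushB, sw_sw _ (pushA_T' _)]

lemma pushB_sw (t : Bool × List ℕ × ℤ) : pushB (sw t) = sw (pushA t) := (sw_pushA t).symm

lemma pushA_sw (t : Bool × List ℕ × ℤ) : pushA (sw t) = sw (pushB t) := (sw_pushB t).symm


lemma braidT : ∀ t, VL t → t.1 = true →
    pushA (pushB (pushA t)) = pushB (pushA (pushB t))
  | (true, [], j), _, _ => rfl
  | (true, [1], j), _, _ => rfl
  | (true, [1, 1], j), _, _ => rfl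
  | (true, 1 :: (k+2) :: r, j), _, _ => rfl
  | (true, 1 :: 1 :: q :: r, j), h, _ => by have := (T2_cc h.2).1; omega
  | (true, 1 :: 0 :: r, j), h, _ => by have := T2_head h.2; omega
  | (true, (k+2) :: r, j), _, _ => rfl
  | (true, 0 :: r, j), h, _ => by have := h.1; omega
  | (false, ks, j), h, e => by simp at e

lemma braid (t : Bool × List ℕ × ℤ) (h : VL t) :
    pushA (pushB (pushA t)) = pushB (pushA (pushB t)) := by
  obtain ⟨s, ks, j⟩ := t
  cases s with
  | true => exact braidT _ h rfl
  | false =>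
    have hne : ks ≠ [] := by
      intro e; subst e; simp [VL] at h
    have hu : VL (true, ks, j) := by
      cases ks with
      | nil => exact absurd rfl hne
      | cons k r => exact h
    have hb := braidT (true, ks, j) hu rfl
    have hsw : sw (true, ks, j) = (false, ks, j) := by
      cases ks with
      | nil => exact absurd rfl hne
      | cons k r => rfl
    calc pushA (pushB (pushA (false, ks, j)))
        = pushA (pushB (pushA (sw (true, ks, j)))) := by rw [hsw]
      _ = sw (pushB (pushA (pushB (true, ks, j)))) := by
          rw [pushA_sw, pushB_sw, pushA_sw]
      _ = sw (pushA (pushB (pushA (true, ks, j)))) := by rw [hb]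
      _ = pushB (pushA (pushB (sw (true, ks, j)))) := by
          rw [pushB_sw, pushA_sw, pushB_sw]
      _ = pushB (pushA (pushB (false, ks, j))) := by rw [hsw]

/-! ### evaluation lemmas -/

lemma dla (X : B3) : ga * (gb * (ga * X)) = dl * X := by
  rw [dl]; simp [mul_assoc]

lemma dlb (X : B3) : gb * (ga * (gb * X)) = dl * X := by
  rw [dl, braid_rel]; simp [mul_assoc]

lemma d_powa (k : ℕ) (X : B3) : dl * (ga ^ k * X) = gb ^ k * (dl * X) := by
  have := d_pow true k
  simp only [gen, if_pos, Bool.not_true, if_neg] at this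
  rw [← mul_assoc, this, mul_assoc]
  simp [gen]

lemma d_powb (k : ℕ) (X : B3) : dl * (gb ^ k * X) = ga ^ k * (dl * X) := by
  have := d_pow false k
  simp [gen] at this
  rw [← mul_assoc, this, mul_assoc]

lemma d_altX (s : Bool) (ks : List ℕ) (X : B3) :
    dl * (altEval s ks * X) = altEval (!s) ks * (dl * X) := by
  rw [← mul_assoc, d_alt, mul_assoc]


lemma dl_e (j : ℤ) : evalT (true, [], j) = dl ^ j := by
  simp [evalT_def, altEval]

lemma eval_pushA : ∀ t, VL t → evalT (pushA t) = ga * evalT t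
  | (true, [], j), h => by
      simp [evalT_def, pushA, altEval, gen, mul_assoc]
  | (true, k :: r, j), h => by
      simp [evalT_def, pushA, altEval, gen, mul_assoc, pow_succ']
  | (false, [], j), h => by simp [VL] at h
  | (false, [1], j), h => by
      simp [evalT_def, pushA, altEval, gen, mul_assoc]
  | (false, [1, 1], j), h => by
      simp [evalT_def, pushA, altEval, gen, mul_assoc]
      rw [dla, ← dl_zpow_succ]
  | (false, 1 :: (k+2) :: r, j), h => by
      simp [evalT_def, pushA, altEval, gen, mul_assoc]
      rw [show k+2 = (k+1)+1 from rfl, pow_succ' ga (k+1)]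
      simp only [mul_assoc]
      rw [dla, d_powa, d_altX, dl_zpow_succ]
      simp
  | (false, 1 :: 1 :: q :: r, j), h => by have := (T2_cc h.2).1; omega
  | (false, 1 :: 0 :: r, j), h => by have := T2_head h.2; omega
  | (false, 0 :: r, j), h => by have := h.1; omega
  | (false, (k+2) :: r, j), h => by
      simp [evalT_def, pushA, altEval, gen, mul_assoc]

lemma eval_pushB : ∀ t, VL t → evalT (pushB t) = gb * evalT t
  | (true, [], j), h => by
      simp [evalT_def, pushB, pushA, sw, altEval, gen, mul_assoc]
  | (false, k :: r, j), h => by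
      simp [evalT_def, pushB, pushA, sw, altEval, gen, mul_assoc, pow_succ']
  | (false, [], j), h => by simp [VL] at h
  | (true, [1], j), h => by
      simp [evalT_def, pushB, pushA, sw, altEval, gen, mul_assoc]
  | (true, [1, 1], j), h => by
      simp [evalT_def, pushB, pushA, sw, altEval, gen, mul_assoc]
      rw [dlb, ← dl_zpow_succ]
  | (true, 1 :: (k+2) :: r, j), h => by
      simp [evalT_def, pushB, pushA, sw, altEval, gen, mul_assoc]
      rw [show k+2 = (k+1)+1 from rfl, pow_succ' gb (k+1)]
      simp only [mul_assoc]
      rw [dlb, d_powb, d_altX, dl_zpow_succ]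
      simp
  | (true, 1 :: 1 :: q :: r, j), h => by have := (T2_cc h.2).1; omega
  | (true, 1 :: 0 :: r, j), h => by have := T2_head h.2; omega
  | (true, 0 :: r, j), h => by have := h.1; omega
  | (true, (k+2) :: r, j), h => by
      simp [evalT_def, pushB, pushA, sw, altEval, gen, mul_assoc]


/-! ### the action on valid triples -/

abbrev TT := {t : Bool × List ℕ × ℤ // VL t}

lemma VL_pushB (t : Bool × List ℕ × ℤ) (h : VL t) : VL (pushB t) :=
  VL_sw _ (VL_pushA _ (VL_sw _ h))

lemma VL_pullB (t : Bool × List ℕ × ℤ) (h : VL t) : VL (pullB t) :=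
  VL_sw _ (VL_pullA _ (VL_sw _ h))

lemma pullB_pushB (t : Bool × List ℕ × ℤ) (h : VL t) : pullB (pushB t) = t := by
  rw [pullB, pushB, sw_sw _ (pushA_T' _), pullA_pushA _ (VL_sw _ h), sw_sw _ (VL_T' _ h)]

lemma pushB_pullB (t : Bool × List ℕ × ℤ) (h : VL t) : pushB (pullB t) = t := by
  rw [pullB, pushB, sw_sw _ (pullA_T' _), pushA_pullA _ (VL_sw _ h), sw_sw _ (VL_T' _ h)]

def eA : Equiv.Perm TT where
  toFun t := ⟨pushA t.1, VL_pushA t.1 t.2⟩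
  invFun t := ⟨pullA t.1, VL_pullA t.1 t.2⟩
  left_inv t := Subtype.ext (pullA_pushA t.1 t.2)
  right_inv t := Subtype.ext (pushA_pullA t.1 t.2)

def eB : Equiv.Perm TT where
  toFun t := ⟨pushB t.1, VL_pushB t.1 t.2⟩
  invFun t := ⟨pullB t.1, VL_pullB t.1 t.2⟩
  left_inv t := Subtype.ext (pullB_pushB t.1 t.2)
  right_inv t := Subtype.ext (pushB_pullB t.1 t.2)

def fg : Bool → Equiv.Perm TT := fun x => if x then eA else eB

lemma relsOne : ∀ r ∈ B3Rel, FreeGroup.lift fg r = 1 := by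
  intro r hr
  have hr' : r = FreeGroup.of true * FreeGroup.of false * FreeGroup.of true *
      (FreeGroup.of false * FreeGroup.of true * FreeGroup.of false)⁻¹ := hr
  subst hr'
  simp only [map_mul, map_inv, FreeGroup.lift_apply_of]
  have : fg true = eA := rfl
  rw [this, show fg false = eB from rfl, mul_inv_eq_one]
  apply Equiv.ext
  intro t
  simp only [Equiv.Perm.mul_apply]
  exact Subtype.ext (braid t.1 t.2)

def phi : B3 →* Equiv.Perm TT := PresentedGroup.toGroup relsOne

lemma phi_a : phi ga = eA := PresentedGroup.toGroup.of relsOne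

lemma phi_b : phi gb = eB := PresentedGroup.toGroup.of relsOne

lemma act_eval (g : B3) : ∀ t : TT, evalT ((phi g) t).1 = g * evalT t.1 := by
  let H : Subgroup B3 :=
    { carrier := {g | ∀ t : TT, evalT ((phi g) t).1 = g * evalT t.1}
      one_mem' := by intro t; simp
      mul_mem' := by
        intro x y hx hy t
        rw [map_mul, Equiv.Perm.mul_apply, hx, hy, mul_assoc]
      inv_mem' := by
        intro x hx t
        have h2 := hx ((phi x⁻¹) t)
        rw [← Equiv.Perm.mul_apply, ← map_mul, mul_inv_cancel, map_one,
          Equiv.Perm.one_apply] at h2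
        rw [eq_inv_mul_iff_mul_eq, ← h2] }
  have hgen : ∀ j : Bool, PresentedGroup.of j ∈ H := by
    intro j
    cases j
    · intro t
      rw [show phi (PresentedGroup.of false) = eB from phi_b]
      exact eval_pushB t.1 t.2
    · intro t
      rw [show phi (PresentedGroup.of true) = eA from phi_a]
      exact eval_pushA t.1 t.2
  exact PresentedGroup.generated_by B3Rel H hgen g

def e0 (j : ℤ) : TT := ⟨(true, [], j), rfl⟩

lemma phi_dl (j : ℤ) : phi dl (e0 j) = e0 (j + 1) := by
  show phi (ga * gb * ga) (e0 j) = e0 (j + 1)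
  rw [map_mul, map_mul, phi_a, phi_b]
  simp only [Equiv.Perm.mul_apply]
  exact Subtype.ext rfl

lemma phi_dlpow : ∀ j : ℤ, (phi (dl ^ j)) (e0 0) = e0 j := by
  intro j
  induction j using Int.induction_on with
  | zero => simp [e0]
  | succ n ih =>
    rw [← dl_zpow_succ, map_mul, Equiv.Perm.mul_apply, ih, phi_dl]
  | pred n ih =>
    have e : dl ^ (-(n : ℤ) - 1) = dl⁻¹ * dl ^ (-(n : ℤ)) := by
      rw [show (-(n : ℤ) - 1) = -1 + -(n : ℤ) by ring, zpow_add, zpow_neg_one]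
    rw [e, map_mul, Equiv.Perm.mul_apply, ih, map_inv]
    have := phi_dl (-(n : ℤ) - 1)
    have e2 : (-(n : ℤ) - 1) + 1 = -(n : ℤ) := by ring
    rw [e2] at this
    rw [← this, Equiv.Perm.inv_def, Equiv.symm_apply_apply]

/-- validity for bare lists -/
def VLl : List ℕ → Prop
  | [] => True
  | k :: r => 1 ≤ k ∧ T2 r

lemma VLl_tail {k : ℕ} {r : List ℕ} (h : VLl (k :: r)) : VLl r := by
  cases r with
  | nil => trivial
  | cons q r' => exact ⟨T2_head h.2, T2_tail h.2⟩

lemma pushA_head (j : ℤ) : ∀ r, T2 r →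
    pushA ((if r = [] then true else false), r, j) = (true, 1 :: r, j)
  | [], _ => rfl
  | 0 :: r', h => by have := T2_head h; omega
  | 1 :: [], h => rfl
  | 1 :: q :: r', h => by have := (T2_cc h).1; omega
  | (k+2) :: r', h => rfl

lemma pushB_head (j : ℤ) (r : List ℕ) (h : T2 r) :
    pushB (true, r, j) = (false, 1 :: r, j) := by
  cases r with
  | nil => rfl
  | cons k r' =>
    have h2 := pushA_head j (k :: r') h
    simp only [List.cons_ne_nil, reduceIte] at h2
    show sw (pushA (sw (true, k :: r', j))) = _
    rw [show sw (true, k :: r', j) = (false, k :: r', j) from rfl]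
    rw [show ((false : Bool), k :: r', j) =
      ((if k :: r' = [] then true else false), k :: r', j) by simp]
    rw [pushA_head j (k :: r') h]
    rfl

lemma eA_pow (m : ℕ) : ∀ (n : ℕ) (r : List ℕ) (j : ℤ) (h : VL (true, n :: r, j)),
    ((eA ^ m) ⟨(true, n :: r, j), h⟩).1 = (true, (n + m) :: r, j) := by
  induction m with
  | zero => intro n r j h; simp
  | succ m ih =>
    intro n r j h
    rw [pow_succ, Equiv.Perm.mul_apply]
    have hstep : eA ⟨(true, n :: r, j), h⟩ =
        ⟨(true, (n+1) :: r, j), VL_pushA _ h⟩ := Subtype.ext rfl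
    rw [hstep]; refine (ih (n+1) r j _).trans ?_
    have : n + 1 + m = n + (m + 1) := by omega
    rw [this]

lemma eB_pow (m : ℕ) : ∀ (n : ℕ) (r : List ℕ) (j : ℤ) (h : VL (false, n :: r, j)),
    ((eB ^ m) ⟨(false, n :: r, j), h⟩).1 = (false, (n + m) :: r, j) := by
  induction m with
  | zero => intro n r j h; simp
  | succ m ih =>
    intro n r j h
    rw [pow_succ, Equiv.Perm.mul_apply]
    have hstep : eB ⟨(false, n :: r, j), h⟩ =
        ⟨(false, (n+1) :: r, j), VL_pushB _ h⟩ := Subtype.ext rfl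
    rw [hstep]; refine (ih (n+1) r j _).trans ?_
    have : n + 1 + m = n + (m + 1) := by omega
    rw [this]

lemma phi_alt : ∀ (ks : List ℕ) (s : Bool) (j : ℤ), VLl ks →
    ((phi (altEval s ks)) (e0 j)).1 = ((if ks = [] then true else s), ks, j) := by
  intro ks
  induction ks with
  | nil => intro s j _; simp [altEval, e0]
  | cons k r ih =>
    intro s j hv
    obtain ⟨hk, ht⟩ := hv
    show ((phi (gen s ^ k * altEval (!s) r)) (e0 j)).1 = _
    rw [map_mul, map_pow, Equiv.Perm.mul_apply]
    have hIH := ih (!s) j (VLl_tail ⟨hk, ht⟩)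
    obtain ⟨m, rfl⟩ : ∃ m, k = m + 1 := ⟨k - 1, by omega⟩
    have hVLu : VL ((if r = [] then true else false), r, j) := by
      cases r with
      | nil => exact rfl
      | cons q r' => exact ⟨T2_head ht, T2_tail ht⟩
    have hVLt : VL ((true : Bool), r, j) := by
      cases r with
      | nil => exact rfl
      | cons q r' => exact ⟨T2_head ht, T2_tail ht⟩
    have hVL1 : VL ((true : Bool), 1 :: r, j) := ⟨le_refl 1, ht⟩
    have hVL1f : VL ((false : Bool), 1 :: r, j) := ⟨le_refl 1, ht⟩
    cases s with
    | true =>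
      have hu : (phi (altEval (!true) r)) (e0 j) =
          ⟨((if r = [] then true else false), r, j), hVLu⟩ := by
        apply Subtype.ext
        simpa using hIH
      rw [show phi (gen true) = eA from phi_a, hu, pow_succ, Equiv.Perm.mul_apply]
      have hstep : eA ⟨((if r = [] then true else false), r, j), hVLu⟩ =
          ⟨((true : Bool), 1 :: r, j), hVL1⟩ := Subtype.ext (pushA_head j r ht)
      rw [hstep, eA_pow]
      simp [Nat.add_comm]
    | false =>
      have hu : (phi (altEval (!false) r)) (e0 j) =
          ⟨((true : Bool), r, j), hVLt⟩ := by
        apply Subtype.ext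
        simp only [hIH]
        cases r <;> simp
      rw [show phi (gen false) = eB from phi_b, hu, pow_succ, Equiv.Perm.mul_apply]
      have hstep : eB ⟨((true : Bool), r, j), hVLt⟩ =
          ⟨((false : Bool), 1 :: r, j), hVL1f⟩ := Subtype.ext (pushB_head j r ht)
      rw [hstep, eB_pow]
      simp [Nat.add_comm]

lemma section_lemma : ∀ t, VL t → ((phi (evalT t)) (e0 0)).1 = t := by
  rintro ⟨s, ks, j⟩ h
  rw [evalT_def, map_mul, Equiv.Perm.mul_apply, phi_dlpow j]
  have hvl : VLl ks := by
    cases ks with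
    | nil => trivial
    | cons k r => exact h
  rw [phi_alt ks s j hvl]
  cases ks with
  | nil => simp [show s = true from h]
  | cons k r => simp

end B3NF

/-- Existence and uniqueness of the right-greedy canonical form
`a^{k₁} b^{k₂} ⋯ (aba)^j` with all interior exponents `> 1`. -/
theorem stmt4 :
    ∀ g : B3, ∃! t : Bool × List ℕ × ℤ,
      (∀ k ∈ t.2.1, 1 ≤ k) ∧
      (∀ i : ℕ, 0 < i → i + 1 < t.2.1.length → 2 ≤ t.2.1[i]!) ∧
      (t.2.1 = [] → t.1 = true) ∧
      altEval t.1 t.2.1 * (ga * gb * ga) ^ t.2.2 = g := by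
  intro g
  refine ⟨((B3NF.phi g) (B3NF.e0 0)).1, ?_, ?_⟩
  · have hv := ((B3NF.phi g) (B3NF.e0 0)).2
    have hsc := (B3NF.VL_iff _).1 hv
    refine ⟨hsc.1, hsc.2.1, hsc.2.2, ?_⟩
    have hact := B3NF.act_eval g (B3NF.e0 0)
    have hres : B3NF.evalT ((B3NF.phi g) (B3NF.e0 0)).1 = g := by
      rw [hact]
      simp [B3NF.evalT_def, altEval, B3NF.e0]
    exact hres
  · rintro ⟨s, ks, j⟩ ⟨h1, h2, h3, h4⟩
    have hv : B3NF.VL (s, ks, j) := (B3NF.VL_iff _).2 ⟨h1, h2, h3⟩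
    have hs := B3NF.section_lemma (s, ks, j) hv
    rw [show B3NF.evalT (s, ks, j) = g from h4] at hs
    exact hs.symm
end

section
/- In B_3, if a word w over {a, b, a⁻¹, b⁻¹} contains the subword aba (or bab) and also contains a letter a⁻¹ or b⁻¹ (anywhere), then w is not geodesic with respect to {a, b, a⁻¹, b⁻¹}. Symmetrically, if w contains a⁻¹b⁻¹a⁻¹ (or b⁻¹a⁻¹b⁻¹) and also a letter a or b, then w is not geodesic. -/
/- ## Auxiliary material -/

lemma braid_rel : ga * gb * ga = gb * ga * gb := by
  have h : PresentedGroup.mk B3Rel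
      (FreeGroup.of true * FreeGroup.of false * FreeGroup.of true *
        (FreeGroup.of false * FreeGroup.of true * FreeGroup.of false)⁻¹) = 1 := by
    rw [PresentedGroup.mk_eq_one_iff]
    exact Subgroup.subset_normalClosure rfl
  have h' : ga * gb * ga * (gb * ga * gb)⁻¹ = 1 := by
    simpa [ga, gb, PresentedGroup.of] using h
  group at h' ⊢
  exact mul_inv_eq_one.mp h'

def Δ : B3 := ga * gb * ga

lemma delta_eq (x : Bool) : Δ = gen x * gen (!x) * gen x := by
  cases x
  · simpa [Δ, gen] using braid_rel
  · simp [Δ, gen]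

lemma delta_gen (x : Bool) : Δ * gen x = gen (!x) * Δ := by
  cases x
  · show ga * gb * ga * gb = ga * (ga * gb * ga)
    conv_rhs => rw [braid_rel]
    group
  · show ga * gb * ga * ga = gb * (ga * gb * ga)
    conv_lhs => rw [braid_rel]
    group

def sw (l : Letter) : Letter := (!l.1, l.2)

lemma delta_letter (l : Letter) : Δ * evalLetter l = evalLetter (sw l) * Δ := by
  obtain ⟨x, s⟩ := l
  cases s
  · simp only [evalLetter, sw, if_neg Bool.false_ne_true]
    calc Δ * (gen x)⁻¹ = (gen (!x))⁻¹ * (gen (!x) * Δ) * (gen x)⁻¹ := by group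
      _ = (gen (!x))⁻¹ * (Δ * gen x) * (gen x)⁻¹ := by rw [delta_gen x]
      _ = (gen (!x))⁻¹ * Δ := by group
  · simpa [evalLetter, sw] using delta_gen x

@[simp] lemma evalWord_nil : evalWord [] = 1 := rfl

@[simp] lemma evalWord_cons (l : Letter) (w : List Letter) :
    evalWord (l :: w) = evalLetter l * evalWord w := by
  simp [evalWord]

@[simp] lemma evalWord_append (u v : List Letter) :
    evalWord (u ++ v) = evalWord u * evalWord v := by
  simp [evalWord]

lemma delta_word (v : List Letter) :
    Δ * evalWord v = evalWord (v.map sw) * Δ := by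
  induction v with
  | nil => simp
  | cons l t ih =>
      simp only [evalWord_cons, List.map_cons, ← mul_assoc, delta_letter]
      rw [mul_assoc (evalLetter (sw l)), ih, mul_assoc]

lemma word_delta (v : List Letter) :
    evalWord v * Δ = Δ * evalWord (v.map sw) := by
  have := delta_word (v.map sw)
  have hss : (v.map sw).map sw = v := by
    rw [List.map_map, show sw ∘ sw = id from funext fun l => by simp [sw], List.map_id]
  rw [hss] at this
  exact this.symm

lemma delta_negletter (x : Bool) :
    Δ * evalLetter (x, false) = gen x * gen (!x) := by
  simp only [evalLetter, if_neg Bool.false_ne_true]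
  rw [delta_eq x]; group

lemma negletter_delta (x : Bool) :
    evalLetter (x, false) * Δ = gen (!x) * gen x := by
  simp only [evalLetter, if_neg Bool.false_ne_true]
  rw [delta_eq x]; group

@[simp] lemma evalLetter_pos (x : Bool) : evalLetter (x, true) = gen x := by
  simp [evalLetter]

/-- The key shortening lemma: if `w` contains an infix `p` evaluating to `Δ` of
length 3, and a negative letter outside `p`, then `w` is not geodesic. -/
lemma key (w p : List Letter) (hp : p <:+: w) (hep : evalWord p = Δ)
    (hlp : p.length = 3) (x : Bool) (hm : (x, false) ∈ w)
    (hmp : (x, false) ∉ p) : ¬ IsGeodesic w := by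
  obtain ⟨u, v, rfl⟩ := hp
  intro hg
  have hm' : (x, false) ∈ u ∨ (x, false) ∈ v := by
    simp only [List.mem_append] at hm
    tauto
  rcases hm' with hmu | hmv
  · obtain ⟨u₁, u₂, rfl⟩ := List.append_of_mem hmu
    set w' : List Letter := u₁ ++ ((!x, true) :: (x, true) :: (u₂.map sw ++ v)) with hw'
    have heq : evalWord w' = evalWord ((u₁ ++ (x, false) :: u₂) ++ p ++ v) := by
      simp only [hw', evalWord_append, evalWord_cons, hep, evalLetter_pos]
      have h1 : evalLetter (x, false) * (evalWord u₂ * Δ) =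
          gen (!x) * (gen x * evalWord (u₂.map sw)) := by
        rw [word_delta, ← mul_assoc, negletter_delta]; group
      calc evalWord u₁ * (gen (!x) * (gen x * (evalWord (u₂.map sw) * evalWord v)))
          = evalWord u₁ * ((gen (!x) * (gen x * evalWord (u₂.map sw))) * evalWord v) := by
            group
        _ = evalWord u₁ * ((evalLetter (x, false) * (evalWord u₂ * Δ)) * evalWord v) := by
            rw [h1]
        _ = evalWord u₁ * (evalLetter (x, false) * evalWord u₂) * Δ * evalWord v := by
            group
    have := hg w' heq
    simp only [hw', List.length_append, List.length_cons, List.length_map, hlp] at this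
    omega
  · obtain ⟨v₁, v₂, rfl⟩ := List.append_of_mem hmv
    set w' : List Letter := u ++ (v₁.map sw ++ ((x, true) :: (!x, true) :: v₂)) with hw'
    have heq : evalWord w' = evalWord (u ++ p ++ (v₁ ++ (x, false) :: v₂)) := by
      simp only [hw', evalWord_append, evalWord_cons, hep, evalLetter_pos]
      have h1 : Δ * evalWord v₁ * evalLetter (x, false) =
          evalWord (v₁.map sw) * (gen x * gen (!x)) := by
        rw [delta_word, mul_assoc, delta_negletter]
      calc evalWord u * (evalWord (v₁.map sw) * (gen x * (gen (!x) * evalWord v₂)))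
          = evalWord u * ((evalWord (v₁.map sw) * (gen x * gen (!x))) * evalWord v₂) := by
            group
        _ = evalWord u * ((Δ * evalWord v₁ * evalLetter (x, false)) * evalWord v₂) := by
            rw [h1]
        _ = evalWord u * Δ * (evalWord v₁ * (evalLetter (x, false) * evalWord v₂)) := by
            group
    have := hg w' heq
    simp only [hw', List.length_append, List.length_cons, List.length_map, hlp] at this
    omega

lemma eval_aba : evalWord [la, lb, la] = Δ := by
  simp [la, lb, Δ, gen, mul_assoc]

lemma eval_bab : evalWord [lb, la, lb] = Δ := by
  simp only [la, lb, evalWord_cons, evalWord_nil, evalLetter_pos, mul_one]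
  rw [show gen false * (gen true * gen false) = gb * ga * gb by simp [gen]; group]
  exact braid_rel.symm

/-- the word-inverse operation. -/
def opw (w : List Letter) : List Letter := (w.map fun l => (l.1, !l.2)).reverse

lemma evalLetter_neg (l : Letter) : evalLetter (l.1, !l.2) = (evalLetter l)⁻¹ := by
  obtain ⟨x, s⟩ := l; cases s <;> simp [evalLetter]

lemma evalWord_opw (w : List Letter) : evalWord (opw w) = (evalWord w)⁻¹ := by
  induction w with
  | nil => simp [opw]
  | cons l t ih =>
      have : opw (l :: t) = opw t ++ [(l.1, !l.2)] := by simp [opw]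
      rw [this, evalWord_append, ih, evalWord_cons, evalWord_nil, mul_one,
        evalLetter_neg, evalWord_cons, mul_inv_rev]

@[simp] lemma length_opw (w : List Letter) : (opw w).length = w.length := by
  simp [opw]

lemma geodesic_opw {w : List Letter} (h : IsGeodesic w) : IsGeodesic (opw w) := by
  intro v hv
  have : evalWord (opw v) = evalWord w := by
    rw [evalWord_opw, hv, evalWord_opw, inv_inv]
  have := h (opw v) this
  simpa using this

lemma infix_opw {p w : List Letter} (h : p <:+: w) : opw p <:+: opw w := by
  obtain ⟨s, t, rfl⟩ := h
  exact ⟨opw t, opw s, by simp [opw]⟩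

lemma mem_opw {l : Letter} {w : List Letter} (h : l ∈ w) : (l.1, !l.2) ∈ opw w := by
  simp only [opw, List.mem_reverse, List.mem_map]
  exact ⟨l, h, rfl⟩

theorem stmt6 (w : List Letter) :
    ((([la, lb, la] <:+: w ∨ [lb, la, lb] <:+: w) ∧ (lA ∈ w ∨ lB ∈ w)) →
      ¬ IsGeodesic w) ∧
    ((([lA, lB, lA] <:+: w ∨ [lB, lA, lB] <:+: w) ∧ (la ∈ w ∨ lb ∈ w)) →
      ¬ IsGeodesic w) := by
  have main : ∀ v : List Letter,
      (([la, lb, la] <:+: v ∨ [lb, la, lb] <:+: v) ∧ (lA ∈ v ∨ lB ∈ v)) →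
        ¬ IsGeodesic v := by
    intro v ⟨hinf, hmem⟩
    obtain ⟨x, hx⟩ : ∃ x : Bool, (x, false) ∈ v := by
      rcases hmem with h | h
      · exact ⟨true, h⟩
      · exact ⟨false, h⟩
    rcases hinf with h | h
    · exact key v _ h eval_aba rfl x hx (by simp [la, lb])
    · exact key v _ h eval_bab rfl x hx (by simp [la, lb])
  constructor
  · exact main w
  · rintro ⟨hinf, hmem⟩ hg
    apply main (opw w)
    constructor
    · rcases hinf with h | h
      · left
        have := infix_opw h
        simpa [opw, la, lb, lA, lB] using this
      · right
        have := infix_opw h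
        simpa [opw, la, lb, lA, lB] using this
    · rcases hmem with h | h
      · left
        have := mem_opw h
        simpa [la, lA] using this
      · right
        have := mem_opw h
        simpa [lb, lB] using this
    · exact geodesic_opw hg
end
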